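/- Let n ≥ 3 be an integer. For i = 0, …, n−1 let θ_i := (2i+1)·π/n and define γ_i : [0, 1/cos(π/n)] → ℝ² by γ_i(t) = t·(cos θ_i, sin θ_i) (so each agent moves along a straight segment of length 1/cos(π/n) from the origin, and the n segments are rotations of each other by 2π/n). Then for every φ ∈ [0, 2π] there exist an index i and t ∈ [0, 1/cos(π/n)] with γ_i(t) inspecting P_φ, and the average inspection time satisfies (1/(2π))·∫₀^{2π} inspect(φ) dφ ≤ (n/(2π))·log((1 + sin(π/n))/(1 − sin(π/n))), where inspect(φ) := inf{ t ∈ [0, 1/cos(π/n)] : some γ_i(t) inspects P_φ }. -/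

import Mathlib

open Real Set

/-- The point of the unit circle at angle `φ`. -/
noncomputable def Ppt (φ : ℝ) : EuclideanSpace ℝ (Fin 2) := !₂[Real.cos φ, Real.sin φ]

/-- `A` inspects the perimeter point `P_φ` if no convex combination of `A` and `P_φ`
lies in the open unit disk. -/
def Inspects (A : EuclideanSpace ℝ (Fin 2)) (φ : ℝ) : Prop :=
  ∀ s ∈ Set.Icc (0:ℝ) 1, 1 ≤ ‖(1 - s) • A + s • Ppt φ‖

/-!
A point `A` inspects `P_φ` iff `1 ≤ ⟪A, P_φ⟫`, i.e. iff `A` lies beyond the tangent at `P_φ`.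
Hence agent `i` inspects `P_φ` at time `t` iff `1 ≤ t cos (φ - θᵢ)`, and the inspection time of
`P_φ` is `1 / maxᵢ cos (φ - θᵢ)`; it is at most `1 / cos (π / n)` because some `θᵢ` lies within
`π / n` of `φ`. On the sector of half-width `π / n` around `θᵢ` the inspection time is at most
`sec (φ - θᵢ)`, whose integral over the sector is `log ((1 + sin (π / n)) / (1 - sin (π / n)))`.
-/

open scoped InnerProductSpace

lemma inner_Ppt (θ φ : ℝ) : ⟪Ppt θ, Ppt φ⟫_ℝ = cos (φ - θ) := by
  simp [Ppt, PiLp.inner_apply, Fin.sum_univ_two, cos_sub]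

lemma norm_Ppt (φ : ℝ) : ‖Ppt φ‖ = 1 := by
  have h : ‖Ppt φ‖ ^ 2 = 1 := by rw [← real_inner_self_eq_norm_sq, inner_Ppt, sub_self, cos_zero]
  exact (pow_eq_one_iff_of_nonneg (norm_nonneg _) two_ne_zero).1 h

section InnerProductSpace

variable {E : Type*} [NormedAddCommGroup E] [InnerProductSpace ℝ E] {P : E}

lemma norm_one_sub_smul_add_smul_sq (hP : ‖P‖ = 1) (A : E) (s : ℝ) :
    ‖(1 - s) • A + s • P‖ ^ 2 = 1 - 2 * (1 - s) * (1 - ⟪A, P⟫_ℝ) + (1 - s) ^ 2 * ‖A - P‖ ^ 2 := by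
  have h : (1 - s) • A + s • P = P + (1 - s) • (A - P) := by module
  rw [h, norm_add_sq_real, norm_smul, inner_smul_right, inner_sub_right, real_inner_self_eq_norm_sq,
    real_inner_comm, hP, Real.norm_eq_abs, mul_pow, sq_abs]
  ring

lemma one_le_norm_one_sub_smul_add_smul_iff (hP : ‖P‖ = 1) (A : E) :
    (∀ s ∈ Icc (0 : ℝ) 1, 1 ≤ ‖(1 - s) • A + s • P‖) ↔ 1 ≤ ⟪A, P⟫_ℝ := by
  simp_rw [← one_le_sq_iff₀ (norm_nonneg _), norm_one_sub_smul_add_smul_sq hP]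
  constructor
  · intro h
    by_contra! hAP
    set δ := 1 - ⟪A, P⟫_ℝ
    set Q := ‖A - P‖ ^ 2
    have hδ : 0 < δ := by linarith
    have hQ : 0 ≤ Q := by positivity
    -- leaving `P` towards `A` by `u := δ / (δ + Q)` enters the open disk
    set u := δ / (δ + Q)
    have hu : 0 < u := by positivity
    have huQ : u * Q ≤ δ := by
      rw [div_mul_eq_mul_div, div_le_iff₀ (by positivity)]; nlinarith
    have hu1 : u ≤ 1 := div_le_one_of_le₀ (le_add_of_nonneg_right hQ) (by positivity)
    have := h (1 - u) ⟨by linarith, by linarith⟩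
    rw [sub_sub_cancel] at this
    nlinarith
  · rintro h s ⟨hs0, hs1⟩
    have : 0 ≤ 1 - s := by linarith
    nlinarith [sq_nonneg (1 - s), norm_nonneg (A - P)]

end InnerProductSpace

lemma inspects_iff_one_le_inner (A : EuclideanSpace ℝ (Fin 2)) (φ : ℝ) :
    Inspects A φ ↔ 1 ≤ ⟪A, Ppt φ⟫_ℝ :=
  one_le_norm_one_sub_smul_add_smul_iff (norm_Ppt φ) A

lemma inspects_smul_Ppt_iff (t θ φ : ℝ) : Inspects (t • Ppt θ) φ ↔ 1 ≤ t * cos (φ - θ) := by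
  rw [inspects_iff_one_le_inner, real_inner_smul_left, inner_Ppt]

noncomputable def agentAngle (n i : ℕ) : ℝ := ((2 * i + 1 : ℕ) : ℝ) * π / n

section MaxCos

variable {ι : Type*} [Fintype ι] [Nonempty ι] (θ : ι → ℝ)

noncomputable def maxCos (φ : ℝ) : ℝ :=
  Finset.univ.sup' Finset.univ_nonempty fun i => cos (φ - θ i)

lemma cos_sub_le_maxCos (φ : ℝ) (i : ι) : cos (φ - θ i) ≤ maxCos θ φ :=
  Finset.le_sup' (fun i => cos (φ - θ i)) (Finset.mem_univ i)

lemma exists_maxCos_eq (φ : ℝ) : ∃ i, maxCos θ φ = cos (φ - θ i) := by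
  obtain ⟨i, -, hi⟩ := Finset.exists_mem_eq_sup' Finset.univ_nonempty fun i => cos (φ - θ i)
  exact ⟨i, hi⟩

lemma continuous_maxCos : Continuous (maxCos θ) :=
  Continuous.finset_sup'_apply _ fun i _ => continuous_cos.comp (continuous_sub_right (θ i))

lemma intervalIntegrable_inv_maxCos {a b : ℝ} (h : ∀ φ ∈ uIcc a b, 0 < maxCos θ φ) :
    IntervalIntegrable (fun φ => (maxCos θ φ)⁻¹) MeasureTheory.volume a b :=
  ((continuous_maxCos θ).continuousOn.inv₀ fun φ hφ => (h φ hφ).ne').intervalIntegrable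

end MaxCos

def inspectionTimes {ι : Type*} (θ : ι → ℝ) (L φ : ℝ) : Set ℝ :=
  {t | t ∈ Icc 0 L ∧ ∃ i, Inspects (t • Ppt (θ i)) φ}

lemma isLeast_inspectionTimes {ι : Type*} [Fintype ι] [Nonempty ι] (θ : ι → ℝ) {L φ : ℝ}
    (hM : 0 < maxCos θ φ) (hL : (maxCos θ φ)⁻¹ ≤ L) :
    IsLeast (inspectionTimes θ L φ) (maxCos θ φ)⁻¹ := by
  refine ⟨⟨⟨inv_nonneg.2 hM.le, hL⟩, ?_⟩, ?_⟩
  · obtain ⟨i, hi⟩ := exists_maxCos_eq θ φ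
    exact ⟨i, (inspects_smul_Ppt_iff _ _ _).2 (by rw [← hi, inv_mul_cancel₀ hM.ne'])⟩
  · rintro t ⟨⟨ht, -⟩, i, hi⟩
    rw [inspects_smul_Ppt_iff] at hi
    rw [inv_le_iff_one_le_mul₀ hM]
    exact hi.trans (mul_le_mul_of_nonneg_left (cos_sub_le_maxCos θ φ i) ht)

lemma exists_abs_sub_odd_mul_pi_div_le {n : ℕ} (hn : n ≠ 0) (φ : ℝ) :
    ∃ k : ℤ, |φ - (2 * k + 1) * π / n| ≤ π / n := by
  have hn' : (0 : ℝ) < n := by positivity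
  set x := φ * n / (2 * π)
  refine ⟨⌊x⌋, ?_⟩
  have h1 := Int.floor_le x
  have h2 := Int.lt_floor_add_one x
  have hφ : φ - (2 * ⌊x⌋ + 1) * π / n = 2 * π / n * (x - ⌊x⌋ - 1 / 2) := by
    simp only [x]; field_simp; ring
  rw [hφ, abs_mul, abs_of_pos (by positivity)]
  calc 2 * π / n * |x - ⌊x⌋ - 1 / 2| ≤ 2 * π / n * (1 / 2) := by
        gcongr; rw [abs_le]; constructor <;> linarith
    _ = π / n := by ring

lemma exists_cos_pi_div_le_cos_sub_agentAngle {n : ℕ} (hn : n ≠ 0) (φ : ℝ) :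
    ∃ i : Fin n, cos (π / n) ≤ cos (φ - agentAngle n i) := by
  obtain ⟨k, hk⟩ := exists_abs_sub_odd_mul_pi_div_le hn φ
  have hn' : (0 : ℤ) < n := by omega
  obtain ⟨m, hm⟩ := Int.eq_ofNat_of_zero_le (Int.emod_nonneg k hn'.ne')
  have hmn : m < n := by have := Int.emod_lt_of_pos k hn'; omega
  refine ⟨⟨m, hmn⟩, ?_⟩
  have hdiv : (m : ℝ) + n * ((k / n : ℤ) : ℝ) = k := by
    have := Int.emod_add_mul_ediv k n
    rw [hm] at this
    exact_mod_cast this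
  have hshift : φ - agentAngle n m = (φ - (2 * k + 1) * π / n) + (k / n : ℤ) * (2 * π) := by
    simp only [agentAngle]; rw [← hdiv]; push_cast; field_simp; ring
  rw [hshift, cos_add_int_mul_two_pi, ← cos_abs (φ - _)]
  exact cos_le_cos_of_nonneg_of_le_pi (abs_nonneg _)
    (div_le_self pi_pos.le (Nat.one_le_cast.2 (Nat.one_le_iff_ne_zero.2 hn))) hk

lemma cos_pi_div_le_maxCos_agentAngle {n : ℕ} [NeZero n] (φ : ℝ) :
    cos (π / n) ≤ maxCos (fun i : Fin n => agentAngle n i) φ := by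
  obtain ⟨i, hi⟩ := exists_cos_pi_div_le_cos_sub_agentAngle (NeZero.ne n) φ
  exact hi.trans (cos_sub_le_maxCos (fun i : Fin n => agentAngle n i) φ i)

lemma integral_inv_cos {c : ℝ} (hc : |c| < π / 2) :
    ∫ x in -c..c, (cos x)⁻¹ = log ((1 + sin c) / (1 - sin c)) := by
  have hcos : ∀ x ∈ uIcc (-c) c, 0 < cos x := by
    intro x hx
    have : |x| ≤ |c| := by
      rcases mem_uIcc.1 hx with ⟨h₁, h₂⟩ | ⟨h₁, h₂⟩
      exacts [abs_le_abs h₂ (by linarith), abs_neg c ▸ abs_le_abs h₂ (by linarith)]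
    exact cos_pos_of_mem_Ioo (abs_lt.1 (this.trans_lt hc))
  have hsin : ∀ x ∈ uIcc (-c) c, 0 < 1 + sin x ∧ 0 < 1 - sin x := by
    intro x hx
    have := hcos x hx
    have := sin_sq_add_cos_sq x
    constructor <;> nlinarith
  -- `(log (1 + sin x) - log (1 - sin x)) / 2` is an antiderivative of `1 / cos x`
  have hderiv : ∀ x ∈ uIcc (-c) c,
      HasDerivAt (fun x => (log (1 + sin x) - log (1 - sin x)) / 2) (cos x)⁻¹ x := by
    intro x hx
    obtain ⟨hp, hm⟩ := hsin x hx
    have := (hcos x hx).ne'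
    refine ((((hasDerivAt_sin x).const_add 1).log hp.ne').sub
      (((hasDerivAt_sin x).const_sub 1).log hm.ne')).div_const 2 |>.congr_deriv ?_
    field_simp
    nlinarith [sin_sq_add_cos_sq x]
  have hint : IntervalIntegrable (fun x => (cos x)⁻¹) MeasureTheory.volume (-c) c :=
    (continuous_cos.continuousOn.inv₀ fun x hx => (hcos x hx).ne').intervalIntegrable
  obtain ⟨hp, hm⟩ := hsin c right_mem_uIcc
  rw [intervalIntegral.integral_eq_sub_of_hasDerivAt hderiv hint, log_div hp.ne' hm.ne', sin_neg,
    ← sub_eq_add_neg, sub_neg_eq_add]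
  ring

lemma integral_inv_maxCos_le {ι : Type*} [Fintype ι] [Nonempty ι] (θ : ι → ℝ) (i : ι) {c : ℝ}
    (hc0 : 0 ≤ c) (hc : c < π / 2) :
    ∫ φ in θ i - c..θ i + c, (maxCos θ φ)⁻¹ ≤ log ((1 + sin c) / (1 - sin c)) := by
  have hle : θ i - c ≤ θ i + c := by linarith
  have hcos : ∀ φ ∈ uIcc (θ i - c) (θ i + c), 0 < cos (φ - θ i) := by
    intro φ hφ
    rw [uIcc_of_le hle] at hφ
    exact cos_pos_of_mem_Ioo ⟨by linarith [hφ.1], by linarith [hφ.2]⟩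
  calc ∫ φ in θ i - c..θ i + c, (maxCos θ φ)⁻¹
      ≤ ∫ φ in θ i - c..θ i + c, (cos (φ - θ i))⁻¹ :=
        intervalIntegral.integral_mono_on hle
          (intervalIntegrable_inv_maxCos θ fun φ hφ =>
            (hcos φ hφ).trans_le (cos_sub_le_maxCos θ φ i))
          ((continuous_cos.comp (continuous_sub_right _)).continuousOn.inv₀
            (fun φ hφ => (hcos φ hφ).ne')).intervalIntegrable
          fun φ hφ => inv_anti₀ (hcos φ (Icc_subset_uIcc hφ)) (cos_sub_le_maxCos θ φ i)
    _ = ∫ x in -c..c, (cos x)⁻¹ := by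
        rw [intervalIntegral.integral_comp_sub_right (fun x => (cos x)⁻¹)]; ring_nf
    _ = log ((1 + sin c) / (1 - sin c)) := integral_inv_cos (by rwa [abs_of_nonneg hc0])

lemma pi_div_lt_pi_div_two {n : ℕ} (hn : 3 ≤ n) : π / n < π / 2 := by
  rw [div_lt_div_iff_of_pos_left pi_pos (by positivity) two_pos]
  exact_mod_cast (show 2 < n by omega)

lemma cos_pi_div_pos {n : ℕ} (hn : 3 ≤ n) : 0 < cos (π / n) :=
  cos_pos_of_mem_Ioo ⟨by linarith [show 0 < π / n by positivity, pi_pos], pi_div_lt_pi_div_two hn⟩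

lemma integral_inv_maxCos_agentAngle_le {n : ℕ} [NeZero n] (hn : 3 ≤ n) :
    ∫ φ in (0 : ℝ)..2 * π, (maxCos (fun i : Fin n => agentAngle n i) φ)⁻¹
      ≤ n * log ((1 + sin (π / n)) / (1 - sin (π / n))) := by
  have hn0 : (n : ℝ) ≠ 0 := NeZero.ne _
  -- the `k`-th sector `[2πk/n, 2π(k+1)/n]` is centred at the angle of agent `k`
  set a : ℕ → ℝ := fun k => 2 * π * k / n
  have ha : ∀ k : ℕ, a k = agentAngle n k - π / n ∧ a (k + 1) = agentAngle n k + π / n := by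
    intro k; simp only [a, agentAngle]; push_cast; constructor <;> field_simp <;> ring
  have hpos : ∀ φ, 0 < maxCos (fun i : Fin n => agentAngle n i) φ := fun φ =>
    (cos_pi_div_pos hn).trans_le (cos_pi_div_le_maxCos_agentAngle φ)
  have hsum := intervalIntegral.sum_integral_adjacent_intervals (a := a) (n := n)
    fun k _ => intervalIntegrable_inv_maxCos _ fun φ _ => hpos φ
  have ha0 : a 0 = 0 := by simp [a]
  have han : a n = 2 * π := by simp only [a]; field_simp
  rw [ha0, han] at hsum
  calc _ = ∑ k ∈ Finset.range n, ∫ φ in a k..a (k + 1),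
          (maxCos (fun i : Fin n => agentAngle n i) φ)⁻¹ := hsum.symm
    _ ≤ ∑ _k ∈ Finset.range n, log ((1 + sin (π / n)) / (1 - sin (π / n))) := by
        refine Finset.sum_le_sum fun k hk => ?_
        rw [(ha k).1, (ha k).2]
        exact integral_inv_maxCos_le (fun i : Fin n => agentAngle n i) ⟨k, Finset.mem_range.1 hk⟩
          (by positivity) (pi_div_lt_pi_div_two hn)
    _ = _ := by rw [Finset.sum_const, Finset.card_range, nsmul_eq_mul]

theorem n_agent_segments_average_bound (n : ℕ) (hn : 3 ≤ n) :
    (∀ φ ∈ Set.Icc 0 (2*π), ∃ i : Fin n, ∃ t ∈ Set.Icc 0 (1 / Real.cos (π/n)),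
        Inspects (t • Ppt (((2 * (i : ℕ) + 1 : ℕ) : ℝ) * π / n)) φ) ∧
    (1/(2*π)) * (∫ φ in (0:ℝ)..(2*π),
        sInf {t : ℝ | t ∈ Set.Icc 0 (1 / Real.cos (π/n)) ∧
          ∃ i : Fin n, Inspects (t • Ppt (((2 * (i : ℕ) + 1 : ℕ) : ℝ) * π / n)) φ})
      ≤ (n/(2*π)) * Real.log ((1 + Real.sin (π/n)) / (1 - Real.sin (π/n))) := by
  have : NeZero n := ⟨by omega⟩
  set θ : Fin n → ℝ := fun i => agentAngle n i
  have hcos := cos_pi_div_pos hn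
  have hleast : ∀ φ, IsLeast (inspectionTimes θ (1 / cos (π / n)) φ) (maxCos θ φ)⁻¹ := fun φ =>
    have hM := cos_pi_div_le_maxCos_agentAngle (n := n) φ
    isLeast_inspectionTimes θ (hcos.trans_le hM) (by rw [one_div]; exact inv_anti₀ hcos hM)
  refine ⟨fun φ _ => ?_, ?_⟩
  · obtain ⟨⟨ht, i, hi⟩, -⟩ := hleast φ
    exact ⟨i, _, ht, hi⟩
  · change 1 / (2 * π) * ∫ φ in (0 : ℝ)..2 * π, sInf (inspectionTimes θ (1 / cos (π / n)) φ) ≤ _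
    rw [intervalIntegral.integral_congr fun φ _ => (hleast φ).csInf_eq]
    calc 1 / (2 * π) * ∫ φ in (0 : ℝ)..2 * π, (maxCos θ φ)⁻¹
        ≤ 1 / (2 * π) * (n * log ((1 + sin (π / n)) / (1 - sin (π / n)))) := by
          gcongr; exact integral_inv_maxCos_agentAngle_le hn
      _ = _ := by ring
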